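/- Let α, β > 1 be real numbers and let f : [0,1] → [0,1] be the base-change-transformation, defined by f(0) = 0 and f(⟨d_i⟩_α) = ⟨d_i⟩_β. Then f is continuous on [0,1]. -/

import Mathlib

/-- The α-expansion value ⟨d_i⟩_α = ∑_{i=1}^∞ (α-1)^{i-1} α^{-(d_1+⋯+d_i)},
with the digit sequence `d : ℕ → ℕ` indexed from 0 (so `d 0` is the first digit). -/
noncomputable def alphaExpansion (α : ℝ) (d : ℕ → ℕ) : ℝ :=
  ∑' i : ℕ, (α - 1) ^ i * α ^ (-((∑ j ∈ Finset.range (i + 1), d j : ℕ) : ℤ))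

/-!
The value of an α-expansion is reverse-lexicographic in its digits: where two digit sequences
first differ, the larger digit gives the smaller value, whatever the base. Since every point of
`(0, 1]` has an expansion in every base (the greedy one), `f` is therefore strictly increasing on
`(0, 1]` and maps `[0, 1]` onto `[0, 1]`; a monotone map of an interval onto an interval has no
jumps.
-/

open Set

theorem MonotoneOn.continuousOn_of_surjOn {α β : Type*} [LinearOrder α] [TopologicalSpace α]
    [OrderTopology α] [LinearOrder β] [TopologicalSpace β] [OrderTopology β] [DenselyOrdered β]
    {f : α → β} {s : Set α} {t : Set β} [s.OrdConnected] [t.OrdConnected]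
    (hmono : MonotoneOn f s) (hmaps : MapsTo f s t) (hsurj : SurjOn f s t) :
    ContinuousOn f s := by
  rw [continuousOn_iff_continuous_domRestrict]
  have hres : Monotone (hmaps.restrict f s t) := fun x y hxy => hmono x.2 y.2 hxy
  exact continuous_subtype_val.comp <|
    hres.continuous_of_surjective (hmaps.restrict_surjective_iff.2 hsurj)

section AlphaExpansion

variable {α β : ℝ} {d e : ℕ → ℕ}

noncomputable def expansionTerm (α : ℝ) (d : ℕ → ℕ) (i : ℕ) : ℝ :=
  (α - 1) ^ i * α ^ (-((∑ j ∈ Finset.range (i + 1), d j : ℕ) : ℤ))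

lemma alphaExpansion_eq_tsum (α : ℝ) (d : ℕ → ℕ) :
    alphaExpansion α d = ∑' i, expansionTerm α d i := rfl

lemma expansionTerm_zero (α : ℝ) (d : ℕ → ℕ) : expansionTerm α d 0 = (α ^ d 0)⁻¹ := by
  simp [expansionTerm]

lemma expansionTerm_succ (hα : α ≠ 0) (d : ℕ → ℕ) (i : ℕ) :
    expansionTerm α d (i + 1) =
      (α ^ d 0)⁻¹ * ((α - 1) * expansionTerm α (fun j => d (j + 1)) i) := by
  rw [expansionTerm, expansionTerm, Finset.sum_range_succ' _ (i + 1)]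
  push_cast
  rw [neg_add, zpow_add₀ hα, pow_succ, zpow_neg α (d 0), zpow_natCast]
  ring

lemma expansionTerm_nonneg (hα : 1 ≤ α) (d : ℕ → ℕ) (i : ℕ) : 0 ≤ expansionTerm α d i :=
  mul_nonneg (pow_nonneg (sub_nonneg.2 hα) _) (zpow_nonneg (by linarith) _)

lemma expansionTerm_le (hα : 1 < α) (hd : ∀ i, 1 ≤ d i) (i : ℕ) :
    expansionTerm α d i ≤ ((α - 1) / α) ^ i * α⁻¹ := by
  have hα0 : 0 < α := by linarith
  have hpow : ∀ n, 1 ≤ n → α ≤ α ^ n := fun n hn => le_self_pow₀ hα.le (by omega)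
  induction i generalizing d with
  | zero => simpa [expansionTerm_zero] using inv_anti₀ hα0 (hpow _ (hd 0))
  | succ i ih =>
    rw [expansionTerm_succ hα0.ne']
    calc (α ^ d 0)⁻¹ * ((α - 1) * expansionTerm α (fun j => d (j + 1)) i)
        ≤ α⁻¹ * ((α - 1) * (((α - 1) / α) ^ i * α⁻¹)) := by
          have := ih (fun j => hd (j + 1))
          gcongr
          · exact mul_nonneg (by linarith) (expansionTerm_nonneg hα.le _ _)
          · exact hpow _ (hd 0)
      _ = ((α - 1) / α) ^ (i + 1) * α⁻¹ := by ring

lemma hasSum_expansionTerm_bound (hα : 1 < α) :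
    HasSum (fun i => ((α - 1) / α) ^ i * α⁻¹) 1 := by
  have hα0 : 0 < α := by linarith
  have hr : (α - 1) / α < 1 := (div_lt_one hα0).2 (by linarith)
  have hsum := (hasSum_geometric_of_lt_one (div_nonneg (by linarith) hα0.le) hr).mul_right α⁻¹
  rwa [one_sub_div hα0.ne', sub_sub_cancel, inv_div, div_one, mul_inv_cancel₀ hα0.ne'] at hsum

lemma summable_expansionTerm (hα : 1 < α) (hd : ∀ i, 1 ≤ d i) :
    Summable (expansionTerm α d) :=
  (hasSum_expansionTerm_bound hα).summable.of_nonneg_of_le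
    (expansionTerm_nonneg hα.le d) (expansionTerm_le hα hd)

lemma alphaExpansion_mem_Ioc (hα : 1 < α) (hd : ∀ i, 1 ≤ d i) :
    alphaExpansion α d ∈ Ioc 0 1 := by
  refine ⟨(summable_expansionTerm hα hd).tsum_pos (expansionTerm_nonneg hα.le d) 0 ?_, ?_⟩
  · rw [expansionTerm_zero]
    exact inv_pos.2 (pow_pos (by linarith) _)
  · have hbound := hasSum_expansionTerm_bound hα
    exact hbound.tsum_eq ▸
      (summable_expansionTerm hα hd).tsum_le_tsum (expansionTerm_le hα hd) hbound.summable

lemma alphaExpansion_eq_first_digit (hα : 1 < α) (hd : ∀ i, 1 ≤ d i) :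
    alphaExpansion α d =
      (α ^ d 0)⁻¹ * (1 + (α - 1) * alphaExpansion α (fun j => d (j + 1))) := by
  rw [alphaExpansion_eq_tsum, (summable_expansionTerm hα hd).tsum_eq_zero_add,
    expansionTerm_zero]
  simp_rw [expansionTerm_succ (show α ≠ 0 by linarith)]
  rw [tsum_mul_left, tsum_mul_left, alphaExpansion_eq_tsum]
  ring

lemma alphaExpansion_mem_Ioc_first_digit (hα : 1 < α) (hd : ∀ i, 1 ≤ d i) :
    alphaExpansion α d ∈ Ioc (α ^ d 0)⁻¹ (α * (α ^ d 0)⁻¹) := by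
  have htail := alphaExpansion_mem_Ioc hα (fun j => hd (j + 1))
  have hinv : 0 < (α ^ d 0)⁻¹ := inv_pos.2 (pow_pos (by linarith) _)
  rw [alphaExpansion_eq_first_digit hα hd]
  constructor
  · exact lt_mul_of_one_lt_right hinv (by nlinarith [htail.1])
  · rw [mul_comm α]
    exact mul_le_mul_of_nonneg_left (by nlinarith [htail.2]) hinv.le

lemma alphaExpansion_lt_of_toLex_lt (hα : 1 < α) (hd : ∀ i, 1 ≤ d i) (he : ∀ i, 1 ≤ e i)
    (h : toLex d < toLex e) : alphaExpansion α e < alphaExpansion α d := by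
  obtain ⟨i, hagree, hlt⟩ : ∃ i, (∀ j < i, d j = e j) ∧ d i < e i := h
  induction i generalizing d e with
  | zero =>
    calc alphaExpansion α e ≤ α * (α ^ e 0)⁻¹ := (alphaExpansion_mem_Ioc_first_digit hα he).2
      _ ≤ α * (α ^ (d 0 + 1))⁻¹ := by gcongr; exacts [hα.le, hlt]
      _ = (α ^ d 0)⁻¹ := by rw [pow_succ']; field_simp
      _ < alphaExpansion α d := (alphaExpansion_mem_Ioc_first_digit hα hd).1
  | succ i ih =>
    have htail := ih (fun j => hd (j + 1)) (fun j => he (j + 1))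
      (fun j hj => hagree (j + 1) (by omega)) hlt
    rw [alphaExpansion_eq_first_digit hα hd, alphaExpansion_eq_first_digit hα he,
      hagree 0 (by omega)]
    have : 0 < α - 1 := by linarith
    gcongr

lemma alphaExpansion_lt_iff_toLex_lt (hα : 1 < α) (hd : ∀ i, 1 ≤ d i) (he : ∀ i, 1 ≤ e i) :
    alphaExpansion α d < alphaExpansion α e ↔ toLex e < toLex d := by
  refine ⟨fun h => lt_of_not_ge fun hle => ?_, alphaExpansion_lt_of_toLex_lt hα he hd⟩
  rcases hle.eq_or_lt with heq | hlt
  · exact h.ne (congrArg (alphaExpansion α) (toLex.injective heq))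
  · exact (alphaExpansion_lt_of_toLex_lt hα hd he hlt).not_gt h

lemma alphaExpansion_lt_iff_alphaExpansion_lt (hα : 1 < α) (hβ : 1 < β) (hd : ∀ i, 1 ≤ d i)
    (he : ∀ i, 1 ≤ e i) :
    alphaExpansion α d < alphaExpansion α e ↔ alphaExpansion β d < alphaExpansion β e := by
  rw [alphaExpansion_lt_iff_toLex_lt hα hd he, alphaExpansion_lt_iff_toLex_lt hβ hd he]

end AlphaExpansion

section Greedy

variable {α x : ℝ}

noncomputable def greedyDigit (α x : ℝ) : ℕ :=
  (-Classical.epsilon fun n : ℤ => x ∈ Ioc (α ^ n) (α ^ (n + 1))).toNat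

lemma greedyDigit_spec (hα : 1 < α) (hx : x ∈ Ioc 0 1) :
    1 ≤ greedyDigit α x ∧ α ^ greedyDigit α x * x ∈ Ioc 1 α := by
  have hα0 : 0 < α := by linarith
  set n := Classical.epsilon fun n : ℤ => x ∈ Ioc (α ^ n) (α ^ (n + 1))
  have hn : x ∈ Ioc (α ^ n) (α ^ (n + 1)) := Classical.epsilon_spec (exists_mem_Ioc_zpow hx.1 hα)
  have hneg : n < 0 := (zpow_lt_one_iff_right₀ hα).1 (hn.1.trans_le hx.2)
  have hdigit : (α ^ greedyDigit α x : ℝ) = (α ^ n)⁻¹ := by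
    rw [greedyDigit, ← zpow_natCast, Int.toNat_of_nonneg (by omega), zpow_neg]
  refine ⟨by rw [greedyDigit]; omega, ?_, ?_⟩ <;> rw [hdigit]
  · rw [lt_inv_mul_iff₀ (zpow_pos hα0 n), mul_one]
    exact hn.1
  · rw [inv_mul_le_iff₀ (zpow_pos hα0 n), ← zpow_add_one₀ hα0.ne']
    exact hn.2

noncomputable def greedyStep (α x : ℝ) : ℝ := (α ^ greedyDigit α x * x - 1) / (α - 1)

lemma greedyStep_mem_Ioc (hα : 1 < α) (hx : x ∈ Ioc 0 1) : greedyStep α x ∈ Ioc 0 1 := by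
  obtain ⟨-, hlo, hhi⟩ := greedyDigit_spec hα hx
  have : 0 < α - 1 := by linarith
  exact ⟨div_pos (by linarith) this, (div_le_one this).2 (by linarith)⟩

lemma eq_greedyStep (hα : 1 < α) (x : ℝ) :
    x = (α ^ greedyDigit α x)⁻¹ * (1 + (α - 1) * greedyStep α x) := by
  have : α - 1 ≠ 0 := by linarith
  have : α ^ greedyDigit α x ≠ 0 := pow_ne_zero _ (by linarith)
  rw [greedyStep]
  field_simp
  ring

noncomputable def greedyDigits (α x : ℝ) (i : ℕ) : ℕ := greedyDigit α ((greedyStep α)^[i] x)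

lemma greedyDigits_greedyStep (α x : ℝ) :
    greedyDigits α (greedyStep α x) = fun i => greedyDigits α x (i + 1) := rfl

lemma one_le_greedyDigits (hα : 1 < α) (hx : x ∈ Ioc 0 1) (i : ℕ) : 1 ≤ greedyDigits α x i := by
  have hmem : (greedyStep α)^[i] x ∈ Ioc 0 1 := by
    induction i with
    | zero => exact hx
    | succ i ih => exact Function.iterate_succ_apply' (greedyStep α) i x ▸ greedyStep_mem_Ioc hα ih
  exact (greedyDigit_spec hα hmem).1

-- `x` and its greedy expansion obey the same first-digit recursion, which contracts their
-- distance by the factor `(α - 1) / α`.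
lemma abs_sub_alphaExpansion_greedyDigits_le (hα : 1 < α) (k : ℕ) (hx : x ∈ Ioc 0 1) :
    |x - alphaExpansion α (greedyDigits α x)| ≤ ((α - 1) / α) ^ k := by
  induction k generalizing x with
  | zero =>
    have := alphaExpansion_mem_Ioc hα (one_le_greedyDigits hα hx)
    rw [pow_zero, abs_sub_le_iff]
    constructor <;> linarith [hx.1, hx.2, this.1, this.2]
  | succ k ih =>
    have hrec : x - alphaExpansion α (greedyDigits α x) = (α ^ greedyDigit α x)⁻¹ * (α - 1) *
        (greedyStep α x - alphaExpansion α (greedyDigits α (greedyStep α x))) := by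
      have hE : alphaExpansion α (greedyDigits α x) = (α ^ greedyDigit α x)⁻¹ *
          (1 + (α - 1) * alphaExpansion α (greedyDigits α (greedyStep α x))) :=
        alphaExpansion_eq_first_digit hα (one_le_greedyDigits hα hx)
      linear_combination eq_greedyStep hα x - hE
    rw [hrec, abs_mul, abs_of_nonneg (by positivity), pow_succ']
    calc _ ≤ α⁻¹ * (α - 1) * ((α - 1) / α) ^ k := by
          gcongr
          · exact le_self_pow₀ hα.le (Nat.one_le_iff_ne_zero.1 (greedyDigit_spec hα hx).1)
          · exact ih (greedyStep_mem_Ioc hα hx)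
      _ = (α - 1) / α * ((α - 1) / α) ^ k := by ring

lemma alphaExpansion_greedyDigits (hα : 1 < α) (hx : x ∈ Ioc 0 1) :
    alphaExpansion α (greedyDigits α x) = x := by
  have hα0 : 0 < α := by linarith
  have hlim := tendsto_pow_atTop_nhds_zero_of_lt_one (div_nonneg (by linarith) hα0.le)
    ((div_lt_one hα0).2 (by linarith : α - 1 < α))
  have := ge_of_tendsto' hlim fun k => abs_sub_alphaExpansion_greedyDigits_le hα k hx
  linarith [abs_nonpos_iff.1 this]

lemma exists_alphaExpansion_eq (hα : 1 < α) (hx : x ∈ Ioc 0 1) :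
    ∃ d : ℕ → ℕ, (∀ i, 1 ≤ d i) ∧ alphaExpansion α d = x :=
  ⟨_, one_le_greedyDigits hα hx, alphaExpansion_greedyDigits hα hx⟩

end Greedy

theorem base_change_continuousOn (α β : ℝ) (hα : 1 < α) (hβ : 1 < β)
    (f : ℝ → ℝ) (hf0 : f 0 = 0)
    (hf : ∀ d : ℕ → ℕ, (∀ i, 1 ≤ d i) →
      f (alphaExpansion α d) = alphaExpansion β d) :
    ContinuousOn f (Set.Icc (0 : ℝ) 1) := by
  have hmaps : MapsTo f (Icc 0 1) (Icc 0 1) := by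
    rintro x ⟨hx0, hx1⟩
    rcases hx0.eq_or_lt with rfl | hx0
    · simp [hf0]
    obtain ⟨d, hd, rfl⟩ := exists_alphaExpansion_eq hα ⟨hx0, hx1⟩
    exact hf d hd ▸ Ioc_subset_Icc_self (alphaExpansion_mem_Ioc hβ hd)
  have hsurj : SurjOn f (Icc 0 1) (Icc 0 1) := by
    rintro t ⟨ht0, ht1⟩
    rcases ht0.eq_or_lt with rfl | ht0
    · exact ⟨0, left_mem_Icc.2 zero_le_one, hf0⟩
    obtain ⟨d, hd, rfl⟩ := exists_alphaExpansion_eq hβ ⟨ht0, ht1⟩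
    exact ⟨_, Ioc_subset_Icc_self (alphaExpansion_mem_Ioc hα hd), hf d hd⟩
  have hmono : MonotoneOn f (Icc 0 1) := by
    rintro x ⟨hx0, hx1⟩ y hy hxy
    rcases hx0.eq_or_lt with rfl | hx0
    · rw [hf0]
      exact (hmaps hy).1
    obtain ⟨d, hd, rfl⟩ := exists_alphaExpansion_eq hα ⟨hx0, hx1⟩
    obtain ⟨e, he, rfl⟩ := exists_alphaExpansion_eq hα ⟨hx0.trans_le hxy, hy.2⟩
    rw [hf d hd, hf e he]
    exact le_of_not_gt fun h => hxy.not_gt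
      ((alphaExpansion_lt_iff_alphaExpansion_lt hβ hα he hd).1 h)
  exact hmono.continuousOn_of_surjOn hmaps hsurj
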